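/- arXiv:1510.08347 — 2 statements merged into one kernel-verified Lean document; each statement's English description precedes it below -/
import Mathlib

section
/- Let J(v) = (1/q)‖v‖^q - (1/2)B(v,v) on a Banach space X with 1 < q < 2, B a continuous symmetric bilinear form, and assume there exist α, ρ > 0 with J(v) ≥ α whenever ‖v‖ = ρ. Define the fiber level c = inf_{v≠0} sup_{t>0} J(tv) and the mountain-pass level b = inf_{γ∈Γ} max_{t∈[0,1]} J(γ(t)), where Γ = {γ ∈ C([0,1],X) : γ(0) = 0, J(γ(1)) < 0}. If additionally there exists some v₀ with B(v₀,v₀) > 0 (so Γ ≠ ∅), then c = b. -/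
open Real Set

lemma aux_key {q u : ℝ} (hq1 : 1 < q) (hq2 : q < 2) (hu : 0 ≤ u) :
    u ^ q / q - u * u / 2 ≤ 1 / q - 1 / 2 := by
  have hq0 : (0:ℝ) < q := by linarith
  have h2q : (0:ℝ) < 2 - q := by linarith
  have hconj : (2/q).HolderConjugate (2/(2-q)) := by
    constructor
    · rw [inv_div, inv_div, inv_one]; ring
    · positivity
    · positivity
  have hy := Real.young_inequality_of_nonneg (Real.rpow_nonneg hu q) zero_le_one hconj
  have e1 : (u ^ q) ^ (2/q) = u * u := by
    rw [← Real.rpow_mul hu]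
    have : q * (2/q) = 2 := by field_simp
    rw [this, show (2:ℝ) = ((2:ℕ):ℝ) by norm_num, Real.rpow_natCast]
    ring
  have e2 : (1:ℝ) ^ (2/(2-q)) = 1 := one_rpow _
  rw [mul_one, e1, e2] at hy
  have h1 : u ^ q ≤ u * u * q / 2 + (2-q)/2 := by
    calc u ^ q ≤ u*u / (2/q) + 1 / (2/(2-q)) := hy
      _ = u * u * q / 2 + (2-q)/2 := by field_simp
  have h2 : u ^ q / q ≤ (u * u * q / 2 + (2-q)/2) / q := by gcongr
  have h3 : (u * u * q / 2 + (2-q)/2) / q = u * u / 2 + (1/q - 1/2) := by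
    field_simp
  rw [h3] at h2; linarith


section
variable {X : Type*} [NormedAddCommGroup X] [NormedSpace ℝ X]
variable {q : ℝ} {B : X →L[ℝ] X →L[ℝ] ℝ} {J : X → ℝ}

lemma aux_J0 (hq0 : 0 < q)
    (hJ : ∀ v : X, J v = (1 / q) * ‖v‖ ^ q - (1 / 2) * B v v) : J 0 = 0 := by
  rw [hJ]; simp [Real.zero_rpow hq0.ne']

lemma aux_Jsmul (hJ : ∀ v : X, J v = (1 / q) * ‖v‖ ^ q - (1 / 2) * B v v)
    {t : ℝ} (ht : 0 < t) (v : X) :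
    J (t • v) = (1/q) * (t ^ q * ‖v‖ ^ q) - (1/2) * (t * t * B v v) := by
  rw [hJ, norm_smul, Real.norm_eq_abs, abs_of_pos ht,
    Real.mul_rpow ht.le (norm_nonneg v)]
  simp only [map_smul, ContinuousLinearMap.smul_apply, smul_eq_mul]
  ring

lemma aux_neg (hq1 : 1 < q) (hq2 : q < 2)
    (hJ : ∀ v : X, J v = (1 / q) * ‖v‖ ^ q - (1 / 2) * B v v)
    {v : X} (hβ : 0 < B v v) :
    ∃ T : ℝ, 0 < T ∧ J (T • v) < 0 := by
  have hq0 : (0:ℝ) < q := by linarith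
  have h2q : (0:ℝ) < 2 - q := by linarith
  set s := ‖v‖ ^ q with hs_def
  have hs : 0 ≤ s := Real.rpow_nonneg (norm_nonneg v) q
  set x := 2*s/(q*(B v v)) + 1 with hx_def
  have hx0 : 0 < x := by positivity
  set T := x ^ (1/(2-q)) with hT_def
  have hT : 0 < T := Real.rpow_pos_of_pos hx0 _
  have hT2q : T ^ (2-q) = x := by
    rw [hT_def, ← Real.rpow_mul hx0.le, one_div, inv_mul_cancel₀ h2q.ne', Real.rpow_one]
  have hTT : T * T = T ^ q * T ^ (2-q) := by
    rw [← Real.rpow_add hT, show q + (2-q) = 2 by ring,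
      show (2:ℝ) = ((2:ℕ):ℝ) by norm_num, Real.rpow_natCast]
    ring
  refine ⟨T, hT, ?_⟩
  rw [aux_Jsmul hJ hT v, ← hs_def, hTT, hT2q]
  have hTq : 0 < T ^ q := Real.rpow_pos_of_pos hT q
  have hxβ : x * B v v = 2*s/q + B v v := by
    rw [hx_def]; field_simp
  have key : (1/q) * (T ^ q * s) - (1/2) * (T ^ q * x * B v v) = -(T^q * B v v)/2 := by
    rw [mul_assoc (T^q) x, hxβ]; field_simp; ring
  rw [key]
  linarith [mul_pos hTq hβ]

lemma aux_lub (hq1 : 1 < q) (hq2 : q < 2)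
    (hJ : ∀ v : X, J v = (1 / q) * ‖v‖ ^ q - (1 / 2) * B v v)
    {v : X} (hv : v ≠ 0) (heq : ‖v‖ ^ q = B v v) :
    IsLUB ((fun t : ℝ => J (t • v)) '' Set.Ioi 0) (J v) := by
  have hs : 0 < ‖v‖ ^ q := Real.rpow_pos_of_pos (norm_pos_iff.mpr hv) q
  apply IsGreatest.isLUB
  constructor
  · exact ⟨1, Set.mem_Ioi.mpr one_pos, by simp⟩
  · rintro x ⟨t, ht, rfl⟩
    rw [Set.mem_Ioi] at ht
    show J (t • v) ≤ J v
    rw [aux_Jsmul hJ ht, hJ v, ← heq]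
    have hk := aux_key hq1 hq2 ht.le
    have h2 : ‖v‖^q * (t ^ q / q - t * t / 2) ≤ ‖v‖^q * (1 / q - 1 / 2) :=
      mul_le_mul_of_nonneg_left hk hs.le
    have e1 : ‖v‖^q * (t ^ q / q - t * t / 2)
        = 1 / q * (t ^ q * ‖v‖^q) - 1 / 2 * (t * t * ‖v‖^q) := by ring
    have e2 : ‖v‖^q * (1 / q - 1 / 2) = 1 / q * ‖v‖^q - 1 / 2 * ‖v‖^q := by ring
    linarith

lemma aux_nonneg (hq1 : 1 < q) (hq2 : q < 2)
    (hJ : ∀ v : X, J v = (1 / q) * ‖v‖ ^ q - (1 / 2) * B v v)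
    {v : X} (hv : v ≠ 0) {a : ℝ}
    (hlub : IsLUB ((fun t : ℝ => J (t • v)) '' Set.Ioi 0) a) : 0 ≤ a := by
  have hq0 : (0:ℝ) < q := by linarith
  have h2q : (0:ℝ) < 2 - q := by linarith
  have hs : 0 < ‖v‖ ^ q := Real.rpow_pos_of_pos (norm_pos_iff.mpr hv) q
  set s := ‖v‖ ^ q with hs_def
  rcases le_or_gt (B v v) 0 with hβ | hβ
  · have h1 : J ((1:ℝ) • v) ≤ a := hlub.1 ⟨1, Set.mem_Ioi.mpr one_pos, by rfl⟩
    rw [aux_Jsmul hJ one_pos] at h1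
    simp only [Real.one_rpow, one_mul] at h1
    linarith [mul_pos (show (0:ℝ) < 1/q by positivity) hs]
  · set x := 2*s/(q*(B v v)) with hx_def
    have hx0 : 0 < x := by positivity
    set T := x ^ (1/(2-q)) with hT_def
    have hT : 0 < T := Real.rpow_pos_of_pos hx0 _
    have hT2q : T ^ (2-q) = x := by
      rw [hT_def, ← Real.rpow_mul hx0.le, one_div, inv_mul_cancel₀ h2q.ne', Real.rpow_one]
    have hTT : T * T = T ^ q * T ^ (2-q) := by
      rw [← Real.rpow_add hT, show q + (2-q) = 2 by ring,
        show (2:ℝ) = ((2:ℕ):ℝ) by norm_num, Real.rpow_natCast]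
      ring
    have h1 : J (T • v) ≤ a := hlub.1 ⟨T, Set.mem_Ioi.mpr hT, by rfl⟩
    rw [aux_Jsmul hJ hT, hTT, hT2q] at h1
    have hxβ : x * B v v = 2*s/q := by
      rw [hx_def]; field_simp
    have key : (1/q) * (T ^ q * s) - (1/2) * (T ^ q * x * B v v) = 0 := by
      rw [mul_assoc (T^q) x, hxβ]; field_simp; ring
    linarith [key]

lemma aux_posbeta (hq1 : 1 < q) (hq2 : q < 2)
    (hJ : ∀ v : X, J v = (1 / q) * ‖v‖ ^ q - (1 / 2) * B v v)
    {v : X} (hv : v ≠ 0) {a : ℝ}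
    (hlub : IsLUB ((fun t : ℝ => J (t • v)) '' Set.Ioi 0) a) : 0 < B v v := by
  have hq0 : (0:ℝ) < q := by linarith
  have hs : 0 < ‖v‖ ^ q := Real.rpow_pos_of_pos (norm_pos_iff.mpr hv) q
  set s := ‖v‖ ^ q with hs_def
  by_contra hβ
  push_neg at hβ
  set t := (q*(|a|+1)/s) ^ (1/q) with ht_def
  have hx0 : 0 < q*(|a|+1)/s := by positivity
  have ht : 0 < t := Real.rpow_pos_of_pos hx0 _
  have htq : t ^ q = q*(|a|+1)/s := by
    rw [ht_def, ← Real.rpow_mul hx0.le, one_div, inv_mul_cancel₀ hq0.ne', Real.rpow_one]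
  have h1 : J (t • v) ≤ a := hlub.1 ⟨t, Set.mem_Ioi.mpr ht, by rfl⟩
  rw [aux_Jsmul hJ ht, htq] at h1
  have hts : (1/q) * (q*(|a|+1)/s * s) = |a| + 1 := by field_simp
  rw [hts] at h1
  have h2 : t * t * B v v ≤ 0 :=
    mul_nonpos_of_nonneg_of_nonpos (mul_nonneg ht.le ht.le) hβ
  linarith [le_abs_self a]

lemma aux_cont_norm (hq0 : 0 < q) : Continuous fun w : X => ‖w‖ ^ q := by
  have hr : Continuous fun r : ℝ => r ^ q := continuous_iff_continuousAt.mpr fun x =>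
    Real.continuousAt_rpow_const x q (Or.inr hq0.le)
  exact hr.comp continuous_norm

lemma aux_cont_B (B : X →L[ℝ] X →L[ℝ] ℝ) : Continuous fun w : X => B w w :=
  B.continuous₂.comp (continuous_id.prodMk continuous_id)

lemma aux_contJ (hq0 : 0 < q)
    (hJ : ∀ v : X, J v = (1 / q) * ‖v‖ ^ q - (1 / 2) * B v v) : Continuous J := by
  have : J = fun v => (1/q) * ‖v‖^q - (1/2) * B v v := funext hJ
  rw [this]
  exact (continuous_const.mul (aux_cont_norm hq0)).sub
    (continuous_const.mul (aux_cont_B B))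

lemma make_path (hq1 : 1 < q) (hq2 : q < 2)
    (hJ : ∀ v : X, J v = (1 / q) * ‖v‖ ^ q - (1 / 2) * B v v)
    {v : X} (hβ : 0 < B v v) :
    ∃ b : ℝ, (∃ γ : ℝ → X, ContinuousOn γ (Icc 0 1) ∧ γ 0 = 0 ∧ J (γ 1) < 0 ∧
      IsGreatest ((fun t => J (γ t)) '' Icc 0 1) b) ∧
      (b = 0 ∨ ∃ t : ℝ, 0 < t ∧ b = J (t • v)) := by
  have hq0 : (0:ℝ) < q := by linarith
  obtain ⟨T, hT, hJT⟩ := aux_neg hq1 hq2 hJ hβ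
  set γ : ℝ → X := fun t => (t * T) • v with hγ
  have hγc : Continuous γ := (continuous_id.mul continuous_const).smul continuous_const
  have hK : IsCompact ((fun t => J (γ t)) '' Icc 0 1) :=
    isCompact_Icc.image ((aux_contJ hq0 hJ).comp hγc)
  have hne : ((fun t => J (γ t)) '' Icc 0 1).Nonempty :=
    (Set.nonempty_Icc.mpr zero_le_one).image _
  obtain ⟨b, hb⟩ := hK.exists_isGreatest hne
  refine ⟨b, ⟨γ, hγc.continuousOn, by simp [hγ], by simpa [hγ] using hJT, hb⟩, ?_⟩
  obtain ⟨t, htmem, hbt⟩ := hb.1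
  rcases eq_or_lt_of_le (mul_nonneg htmem.1 hT.le) with h0 | h0
  · left
    rw [← hbt]
    show J ((t * T) • v) = 0
    rw [← h0, zero_smul, aux_J0 hq0 hJ]
  · right
    exact ⟨t * T, h0, by rw [← hbt]⟩

lemma path_to_fiber (hq1 : 1 < q) (hq2 : q < 2)
    (hJ : ∀ v : X, J v = (1 / q) * ‖v‖ ^ q - (1 / 2) * B v v)
    {a : ℝ} {γ : ℝ → X}
    (hγc : ContinuousOn γ (Icc 0 1)) (hγ0 : γ 0 = 0) (hγ1 : J (γ 1) < 0)
    (ha : IsGreatest ((fun t => J (γ t)) '' Icc 0 1) a) :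
    ∃ v : X, v ≠ 0 ∧ IsLUB ((fun t : ℝ => J (t • v)) '' Ioi 0) (J v) ∧ J v ≤ a := by
  have hq0 : (0:ℝ) < q := by linarith
  have h2q : (0:ℝ) < 2 - q := by linarith
  have hγ1ne : γ 1 ≠ 0 := by
    intro h; rw [h, aux_J0 hq0 hJ] at hγ1; exact lt_irrefl 0 hγ1
  have hnγ1 : 0 < ‖γ 1‖ := norm_pos_iff.mpr hγ1ne
  set C := ‖B‖ + 1 with hC_def
  have hC : 0 < C := by positivity
  have hBbound : ∀ w : X, B w w ≤ C * (‖w‖ * ‖w‖) := by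
    intro w
    have h1 : B w w ≤ |B w w| := le_abs_self _
    have h2 : ‖B w w‖ ≤ ‖B‖ * ‖w‖ * ‖w‖ := B.le_opNorm₂ w w
    rw [Real.norm_eq_abs] at h2
    nlinarith [norm_nonneg w, norm_nonneg (B : X →L[ℝ] X →L[ℝ] ℝ),
      mul_nonneg (norm_nonneg w) (norm_nonneg w)]
  set δ := min (‖γ 1‖/2) ((1/(2*C)) ^ (1/(2-q))) with hδ_def
  have hδpos : 0 < δ := lt_min (by positivity) (Real.rpow_pos_of_pos (by positivity) _)
  have hδlt : δ < ‖γ 1‖ := lt_of_le_of_lt (min_le_left _ _) (by linarith)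
  have hδq : C * (δ * δ) < δ ^ q := by
    have h1 : δ ^ (2-q) ≤ 1/(2*C) := by
      calc δ ^ (2-q) ≤ ((1/(2*C)) ^ (1/(2-q))) ^ (2-q) :=
            Real.rpow_le_rpow hδpos.le (min_le_right _ _) h2q.le
        _ = 1/(2*C) := by
            rw [← Real.rpow_mul (by positivity), one_div (2-q),
              inv_mul_cancel₀ h2q.ne', Real.rpow_one]
    have hδq2 : δ * δ = δ ^ (2-q) * δ ^ q := by
      rw [← Real.rpow_add hδpos, show 2 - q + q = 2 by ring,
        show (2:ℝ) = ((2:ℕ):ℝ) by norm_num, Real.rpow_natCast]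
      ring
    have hδqpos : 0 < δ ^ q := Real.rpow_pos_of_pos hδpos q
    calc C * (δ * δ) = (C * δ^(2-q)) * δ^q := by rw [hδq2]; ring
      _ ≤ (C * (1/(2*C))) * δ^q :=
          mul_le_mul_of_nonneg_right (mul_le_mul_of_nonneg_left h1 hC.le) hδqpos.le
      _ = δ^q/2 := by field_simp
      _ < δ^q := by linarith
  set S := Icc (0:ℝ) 1 ∩ (fun t => ‖γ t‖) ⁻¹' Iic δ with hS_def
  have hSclosed : IsClosed S :=
    ContinuousOn.preimage_isClosed_of_isClosed
      (continuous_norm.comp_continuousOn hγc) isClosed_Icc isClosed_Iic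
  have hS0 : (0:ℝ) ∈ S := ⟨⟨le_refl 0, zero_le_one⟩, by
    simp [Set.mem_preimage, hγ0, hδpos.le]⟩
  have hSbdd : BddAbove S := ⟨1, fun t ht => ht.1.2⟩
  set t₂ := sSup S with ht₂_def
  have ht₂S : t₂ ∈ S := hSclosed.csSup_mem ⟨0, hS0⟩ hSbdd
  have ht₂Icc : t₂ ∈ Icc (0:ℝ) 1 := ht₂S.1
  have ht₂δ : ‖γ t₂‖ ≤ δ := ht₂S.2
  have ht₂lt1 : t₂ < 1 := lt_of_le_of_ne ht₂Icc.2 (by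
    intro h; rw [h] at ht₂δ; linarith)
  have hsub : Icc t₂ 1 ⊆ Icc (0:ℝ) 1 := Icc_subset_Icc ht₂Icc.1 le_rfl
  have hnormeq : ‖γ t₂‖ = δ := by
    have hcn : ContinuousOn (fun t => ‖γ t‖) (Icc t₂ 1) :=
      continuous_norm.comp_continuousOn (hγc.mono hsub)
    have hmem : δ ∈ Icc ((fun t => ‖γ t‖) t₂) ((fun t => ‖γ t‖) 1) := ⟨ht₂δ, hδlt.le⟩
    obtain ⟨t₃, ht₃mem, ht₃⟩ := intermediate_value_Icc ht₂lt1.le hcn hmem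
    have ht₃S : t₃ ∈ S := ⟨hsub ht₃mem, by
      rw [Set.mem_preimage, Set.mem_Iic]
      exact le_of_eq ht₃⟩
    have h1 : t₃ ≤ t₂ := le_csSup hSbdd ht₃S
    have h2 : t₃ = t₂ := le_antisymm h1 ht₃mem.1
    rw [← h2]; exact ht₃
  set h : ℝ → ℝ := fun t => ‖γ t‖ ^ q - B (γ t) (γ t) with hh_def
  have hhc : ContinuousOn h (Icc t₂ 1) :=
    ((aux_cont_norm hq0).sub (aux_cont_B B)).comp_continuousOn (hγc.mono hsub)
  have hht₂ : 0 < h t₂ := by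
    have hb := hBbound (γ t₂)
    rw [hnormeq] at hb
    show 0 < ‖γ t₂‖ ^ q - B (γ t₂) (γ t₂)
    rw [hnormeq]
    linarith
  have hh1 : h 1 < 0 := by
    have hs1 : 0 < ‖γ 1‖ ^ q := Real.rpow_pos_of_pos hnγ1 q
    rw [hJ] at hγ1
    show ‖γ 1‖ ^ q - B (γ 1) (γ 1) < 0
    have hd2 : 2 * ‖γ 1‖ ^ q < q * B (γ 1) (γ 1) := by
      have h2 : 1/q * ‖γ 1‖ ^ q < 1/2 * B (γ 1) (γ 1) := by linarith
      rw [div_mul_eq_mul_div, div_mul_eq_mul_div, div_lt_div_iff₀ hq0 two_pos] at h2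
      linarith
    have hβpos : 0 < B (γ 1) (γ 1) := by nlinarith
    nlinarith [mul_pos (show (0:ℝ) < 2 - q by linarith) hβpos]
  have h0mem : (0:ℝ) ∈ Icc (h 1) (h t₂) := ⟨hh1.le, hht₂.le⟩
  obtain ⟨t₀, ht₀mem, ht₀⟩ := intermediate_value_Icc' ht₂lt1.le hhc h0mem
  have hvne : γ t₀ ≠ 0 := by
    rcases eq_or_lt_of_le ht₀mem.1 with he | hlt
    · rw [← he]
      intro hc
      rw [hc, norm_zero] at hnormeq
      exact hδpos.ne hnormeq
    · intro hcontra
      have ht₀Icc : t₀ ∈ Icc (0:ℝ) 1 := hsub ht₀mem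
      have ht₀S : t₀ ∈ S := ⟨ht₀Icc, by
        rw [Set.mem_preimage, Set.mem_Iic, hcontra, norm_zero]
        exact hδpos.le⟩
      linarith [le_csSup hSbdd ht₀S]
  have heq : ‖γ t₀‖ ^ q = B (γ t₀) (γ t₀) := by
    have : ‖γ t₀‖ ^ q - B (γ t₀) (γ t₀) = 0 := ht₀
    linarith
  exact ⟨γ t₀, hvne, aux_lub hq1 hq2 hJ hvne heq, ha.2 ⟨t₀, hsub ht₀mem, rfl⟩⟩

end

theorem stmt_9 (X : Type*) [NormedAddCommGroup X] [NormedSpace ℝ X] [CompleteSpace X]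
    (q : ℝ) (hq1 : 1 < q) (hq2 : q < 2)
    (B : X →L[ℝ] X →L[ℝ] ℝ) (hBsymm : ∀ v w, B v w = B w v)
    (J : X → ℝ) (hJ : ∀ v, J v = (1 / q) * ‖v‖ ^ q - (1 / 2) * B v v)
    (α ρ : ℝ) (hα : 0 < α) (hρ : 0 < ρ) (hsphere : ∀ v : X, ‖v‖ = ρ → J v ≥ α)
    (v₀ : X) (hv₀ : 0 < B v₀ v₀) :
    sInf {a : ℝ | ∃ v : X, v ≠ 0 ∧ IsLUB ((fun t : ℝ => J (t • v)) '' Set.Ioi 0) a} =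
      sInf {a : ℝ | ∃ γ : ℝ → X, ContinuousOn γ (Set.Icc 0 1) ∧ γ 0 = 0 ∧ J (γ 1) < 0 ∧
        IsGreatest ((fun t => J (γ t)) '' Set.Icc 0 1) a} := by
  have hq0 : (0:ℝ) < q := by linarith
  set A := {a : ℝ | ∃ v : X, v ≠ 0 ∧ IsLUB ((fun t : ℝ => J (t • v)) '' Set.Ioi 0) a}
    with hA_def
  set Bs := {a : ℝ | ∃ γ : ℝ → X, ContinuousOn γ (Set.Icc 0 1) ∧ γ 0 = 0 ∧ J (γ 1) < 0 ∧
      IsGreatest ((fun t => J (γ t)) '' Set.Icc 0 1) a} with hBs_def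
  have hAlb : ∀ a ∈ A, (0:ℝ) ≤ a := by
    rintro a ⟨v, hv, hl⟩
    exact aux_nonneg hq1 hq2 hJ hv hl
  have hBlb : ∀ b ∈ Bs, (0:ℝ) ≤ b := by
    rintro b ⟨γ, hc, h0, h1, hg⟩
    have : J (γ 0) ∈ (fun t => J (γ t)) '' Set.Icc 0 1 :=
      ⟨0, Set.mem_Icc.mpr ⟨le_refl 0, zero_le_one⟩, rfl⟩
    have h2 := hg.2 this
    rw [h0, aux_J0 hq0 hJ] at h2
    exact h2
  have hAbdd : BddBelow A := ⟨0, fun x hx => hAlb x hx⟩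
  have hBbdd : BddBelow Bs := ⟨0, fun x hx => hBlb x hx⟩
  have hBne : Bs.Nonempty := by
    obtain ⟨b, hb, _⟩ := make_path hq1 hq2 hJ hv₀
    exact ⟨b, hb⟩
  have hAne : A.Nonempty := by
    obtain ⟨b, hbmem⟩ := hBne
    obtain ⟨γ, hc, h0, h1, hg⟩ := hbmem
    obtain ⟨v, hv, hl, _⟩ := path_to_fiber hq1 hq2 hJ hc h0 h1 hg
    exact ⟨J v, v, hv, hl⟩
  apply le_antisymm
  · apply le_csInf hBne
    rintro b ⟨γ, hc, h0, h1, hg⟩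
    obtain ⟨v, hv, hl, hle⟩ := path_to_fiber hq1 hq2 hJ hc h0 h1 hg
    exact le_trans (csInf_le hAbdd ⟨v, hv, hl⟩) hle
  · apply le_csInf hAne
    rintro a ⟨v, hv, hl⟩
    have hβ : 0 < B v v := aux_posbeta hq1 hq2 hJ hv hl
    obtain ⟨b, hbmem, hbval⟩ := make_path hq1 hq2 hJ hβ
    have hba : b ≤ a := by
      rcases hbval with rfl | ⟨t, ht, rfl⟩
      · exact aux_nonneg hq1 hq2 hJ hv hl
      · exact hl.1 ⟨t, Set.mem_Ioi.mpr ht, rfl⟩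
    exact le_trans (csInf_le hBbdd hbmem) hba
end

section
/- Let X be a Banach space, K ⊂ X, and suppose the group ℤ^N acts on X by isometries (translations) with K invariant. Let A ⊂ K contain exactly one point from each orbit, and assume A is finite. Suppose moreover that every nonzero w ∈ X satisfies: if (y_n) ⊂ ℤ^N with |y_n| → ∞ then w(·+y_n) ⇀ 0 weakly. If for any two distinct orbits the representatives are distinct, and every element of K is of the form a(·-y) for a ∈ A, y ∈ ℤ^N, and 0 ∉ K or all elements of K are nonzero — then κ := inf{‖v-w‖ : v, w ∈ K, v ≠ w} > 0. -/
open Filter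

theorem stmt_11 (N : ℕ) (X : Type*) [NormedAddCommGroup X] [NormedSpace ℝ X] [CompleteSpace X]
    (T : (Fin N → ℤ) → X ≃ₗᵢ[ℝ] X)
    (hT0 : T 0 = LinearIsometryEquiv.refl ℝ X)
    (hTadd : ∀ y z : Fin N → ℤ, ∀ v : X, T (y + z) v = T y (T z v))
    (K : Set X) (hKinv : ∀ (y : Fin N → ℤ), ∀ v ∈ K, T y v ∈ K)
    (hK0 : (0 : X) ∉ K)
    (A : Set X) (hAK : A ⊆ K) (hAfin : A.Finite)
    (hrep : ∀ v ∈ K, ∃ a ∈ A, ∃ y : Fin N → ℤ, v = T y a)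
    (hdistinct : ∀ a ∈ A, ∀ b ∈ A, (∃ y : Fin N → ℤ, b = T y a) → a = b)
    (hweak : ∀ w : X, w ≠ 0 → ∀ y : ℕ → Fin N → ℤ,
      Tendsto (fun n => ‖(fun i => (y n i : ℝ))‖) atTop atTop →
      ∀ φ : X →L[ℝ] ℝ, Tendsto (fun n => φ (T (y n) w)) atTop (nhds 0)) :
    ∃ κ > 0, ∀ v ∈ K, ∀ w ∈ K, v ≠ w → κ ≤ ‖v - w‖ := by
  classical
  have key : ∀ a ∈ A, ∀ b ∈ A, ∃ κ, 0 < κ ∧ ∀ d : Fin N → ℤ, T d b ≠ a → κ ≤ ‖a - T d b‖ := by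
    intro a ha b hb
    by_contra hcon
    push_neg at hcon
    have hcon' : ∀ κ : ℝ, 0 < κ → ∃ d : Fin N → ℤ, T d b ≠ a ∧ ‖a - T d b‖ < κ := by
      intro κ hκ
      obtain ⟨d, hd1, hd2⟩ := hcon κ hκ
      exact ⟨d, hd1, hd2⟩
    have hb0 : b ≠ 0 := fun h => hK0 (h ▸ hAK hb)
    have step : ∀ R : ℕ, ∃ d : Fin N → ℤ, T d b ≠ a ∧ ‖a - T d b‖ < 1/(R+1) ∧
        ∃ i, (R : ℤ) < |d i| := by
      intro R
      set F : Finset (Fin N → ℤ) := Fintype.piFinset (fun _ => Finset.Icc (-(R:ℤ)) R) with hF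
      set F' := F.filter (fun d => T d b ≠ a) with hF'
      set m : ℝ := if h : F'.Nonempty then F'.inf' h (fun d => ‖a - T d b‖) else 1 with hm
      have hmpos : 0 < m := by
        rw [hm]
        split
        · rw [Finset.lt_inf'_iff]
          intro d hd
          have h1 : T d b ≠ a := (Finset.mem_filter.mp hd).2
          have h2 : a - T d b ≠ 0 := sub_ne_zero.mpr (Ne.symm h1)
          exact norm_pos_iff.mpr h2
        · norm_num
      have hRpos : (0:ℝ) < 1/(R+1) := by positivity
      obtain ⟨d, hd1, hd2⟩ := hcon' (min m (1/(R+1))) (lt_min hmpos hRpos)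
      refine ⟨d, hd1, lt_of_lt_of_le hd2 (min_le_right _ _), ?_⟩
      by_contra hno
      push_neg at hno
      have hdF : d ∈ F' := by
        rw [hF', Finset.mem_filter]
        refine ⟨?_, hd1⟩
        rw [hF, Fintype.mem_piFinset]
        intro i
        rw [Finset.mem_Icc]
        have := hno i
        constructor <;> [exact neg_le_of_abs_le this; exact le_of_abs_le this]
      have hle : m ≤ ‖a - T d b‖ := by
        rw [hm, dif_pos ⟨d, hdF⟩]
        exact Finset.inf'_le _ hdF
      have := lt_of_lt_of_le hd2 (min_le_left _ _)
      linarith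
    choose z hz1 hz2 hz3 using step
    have hnorm : Tendsto (fun n => ‖(fun i => (z n i : ℝ))‖) atTop atTop := by
      apply tendsto_atTop_mono _ tendsto_natCast_atTop_atTop
      intro n
      obtain ⟨i, hi⟩ := hz3 n
      have h1 : (n:ℝ) ≤ |(z n i : ℝ)| := by
        have : ((n:ℤ):ℝ) ≤ (|z n i| : ℤ) := by exact_mod_cast le_of_lt hi
        simpa [Int.cast_abs] using this
      calc (n:ℝ) ≤ |(z n i : ℝ)| := h1
        _ = ‖(fun i => (z n i : ℝ)) i‖ := (Real.norm_eq_abs _).symm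
        _ ≤ ‖(fun i => (z n i : ℝ))‖ := norm_le_pi_norm (fun j => (z n j : ℝ)) i
    have hconv : Tendsto (fun n => a - T (z n) b) atTop (nhds 0) := by
      rw [tendsto_zero_iff_norm_tendsto_zero]
      apply squeeze_zero (fun n => norm_nonneg _) (fun n => le_of_lt (hz2 n))
      exact tendsto_one_div_add_atTop_nhds_zero_nat
    have ha0 : a = 0 := by
      by_contra hne
      obtain ⟨g, hg1, hg2⟩ := exists_dual_vector ℝ a (norm_ne_zero_iff.mpr hne)
      have h1 := hweak b hb0 z hnorm g
      have h2 : Tendsto (fun n => g a - g (T (z n) b)) atTop (nhds 0) := by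
        have := (g.continuous.tendsto 0).comp hconv
        simpa [Function.comp_def] using this
      have h3 : Tendsto (fun _ : ℕ => g a) atTop (nhds 0) := by
        have := h2.add h1
        simpa using this
      have h4 : g a = 0 := tendsto_nhds_unique tendsto_const_nhds h3
      rw [h4] at hg2
      exact hne (norm_eq_zero.mp hg2.symm)
    exact hK0 (ha0 ▸ hAK ha)
  choose! κf hκpos hκ using key
  by_cases hA : A.Nonempty
  · have hsne : (hAfin.toFinset ×ˢ hAfin.toFinset).Nonempty := by
      obtain ⟨a, ha⟩ := hA
      exact ⟨(a, a), Finset.mem_product.mpr ⟨hAfin.mem_toFinset.mpr ha, hAfin.mem_toFinset.mpr ha⟩⟩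
    refine ⟨(hAfin.toFinset ×ˢ hAfin.toFinset).inf' hsne (fun p => κf p.1 p.2), ?_, ?_⟩
    · rw [gt_iff_lt, Finset.lt_inf'_iff]
      rintro ⟨p, q⟩ hp
      obtain ⟨hp1, hp2⟩ := Finset.mem_product.mp hp
      exact hκpos p (hAfin.mem_toFinset.mp hp1) q (hAfin.mem_toFinset.mp hp2)
    · intro v hv w hw hvw
      obtain ⟨av, hav, yv, rfl⟩ := hrep v hv
      obtain ⟨aw, haw, yw, rfl⟩ := hrep w hw
      have heq : T yw aw = T yv (T (yw - yv) aw) := by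
        rw [← hTadd, show yv + (yw - yv) = yw from by abel]
      have hnorm2 : ‖T yv av - T yw aw‖ = ‖av - T (yw - yv) aw‖ := by
        rw [heq, ← (T yv).map_sub, (T yv).norm_map]
      rw [hnorm2]
      have hne : T (yw - yv) aw ≠ av := by
        intro h
        apply hvw
        rw [heq, h]
      calc (hAfin.toFinset ×ˢ hAfin.toFinset).inf' hsne (fun p => κf p.1 p.2)
          ≤ κf av aw := by
            exact Finset.inf'_le (b := (av, aw)) (fun p => κf p.1 p.2)
              (Finset.mem_product.mpr
                ⟨hAfin.mem_toFinset.mpr hav, hAfin.mem_toFinset.mpr haw⟩)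
        _ ≤ _ := hκ av hav aw haw _ hne
  · refine ⟨1, one_pos, ?_⟩
    intro v hv
    obtain ⟨a, ha, _⟩ := hrep v hv
    exact absurd ⟨a, ha⟩ hA
end
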